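/- Let X be an n × 2 matrix with entries in {0, 1}, and let a₁, a₂, a₃ denote respectively the number of rows of X equal to (1,1), (1,0), and (0,1) (rows equal to (0,0) being unrestricted in number). Then the encoded family (A_1, A_2) with A_j = {i : X_{ij} = 1} is a maximal 2-presentation if and only if one of the following holds: (i) a₂ = a₃ = 0 and a₁ ≥ 2; (ii) a₁ ≥ 1 and exactly one of a₂, a₃ is zero while the other is at least 2; or (iii) a₂ ≥ 2 and a₃ ≥ 2. Equivalently, up to permuting rows and columns and ignoring all-zero rows, the maximal representations of rank-2 transversal matroids are exactly: matrices whose nonzero rows are all (1,1) with at least two such rows; matrices with at least one (1,1) row and at least two (1,0) rows and no (0,1) rows (or the column-swapped form); and matrices with at least two (1,0) rows and at least two (0,1) rows. -/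
import Mathlib


/-- `S` is a partial transversal of the family `A : ι → Set α`: there is an injective map
`f : S → ι` with `s ∈ A (f s)` for all `s ∈ S`. -/
def IsPartialTransversal {α ι : Type*} (A : ι → Set α) (S : Finset α) : Prop :=
  ∃ f : S → ι, Function.Injective f ∧ ∀ s : S, (s : α) ∈ A (f s)

/-- The family `A` of `r` subsets of `α` is a maximal `r`-presentation: it has rank `r`
(maximum cardinality of a partial transversal), and every family `B` of `r` subsets with the
same partial transversals and `A i ⊆ B i` for all `i` satisfies `B i = A i` for all `i`. -/
def IsMaximalPresentation {α : Type*} {r : ℕ} (A : Fin r → Set α) : Prop :=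
  (∃ B : Finset α, IsPartialTransversal A B ∧ B.card = r) ∧
  (∀ S : Finset α, IsPartialTransversal A S → S.card ≤ r) ∧
  (∀ B : Fin r → Set α,
    (∀ S : Finset α, IsPartialTransversal B S ↔ IsPartialTransversal A S) →
    (∀ i, A i ⊆ B i) → ∀ i, B i = A i)

lemma fin2_cases (i : Fin 2) : i = 0 ∨ i = 1 := by omega

lemma transversal_char {α : Type*} [DecidableEq α] (A : Fin 2 → Set α) (S : Finset α) :
    IsPartialTransversal A S ↔
      S = ∅ ∨ (∃ x, S = {x} ∧ (x ∈ A 0 ∨ x ∈ A 1)) ∨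
      (∃ x y, x ≠ y ∧ S = {x, y} ∧ x ∈ A 0 ∧ y ∈ A 1) := by
  classical
  constructor
  · rintro ⟨f, hinj, hmem⟩
    have hcard : S.card ≤ 2 := by
      have := Fintype.card_le_of_injective f hinj
      simpa using this
    obtain h0 | h1 | h2 : S.card = 0 ∨ S.card = 1 ∨ S.card = 2 := by omega
    · exact Or.inl (Finset.card_eq_zero.mp h0)
    · obtain ⟨a, rfl⟩ := Finset.card_eq_one.mp h1
      have ha : a ∈ ({a} : Finset α) := Finset.mem_singleton_self a
      refine Or.inr (Or.inl ⟨a, rfl, ?_⟩)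
      rcases fin2_cases (f ⟨a, ha⟩) with h | h
      · exact Or.inl (by have := hmem ⟨a, ha⟩; rwa [h] at this)
      · exact Or.inr (by have := hmem ⟨a, ha⟩; rwa [h] at this)
    · obtain ⟨x, y, hxy, rfl⟩ := Finset.card_eq_two.mp h2
      have hx : x ∈ ({x, y} : Finset α) := by simp
      have hy : y ∈ ({x, y} : Finset α) := by simp
      have hne : f ⟨x, hx⟩ ≠ f ⟨y, hy⟩ := by
        intro h
        exact hxy (Subtype.mk_eq_mk.mp (hinj h))
      have hmx := hmem ⟨x, hx⟩
      have hmy := hmem ⟨y, hy⟩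
      rcases fin2_cases (f ⟨x, hx⟩) with h | h
      · have h' : f ⟨y, hy⟩ = 1 := by omega
        rw [h] at hmx; rw [h'] at hmy
        exact Or.inr (Or.inr ⟨x, y, hxy, rfl, hmx, hmy⟩)
      · have h' : f ⟨y, hy⟩ = 0 := by omega
        rw [h] at hmx; rw [h'] at hmy
        exact Or.inr (Or.inr ⟨y, x, Ne.symm hxy, Finset.pair_comm x y, hmy, hmx⟩)
  · rintro (rfl | ⟨x, rfl, hx⟩ | ⟨x, y, hxy, rfl, hx, hy⟩)
    · exact ⟨fun s => 0, fun a => absurd a.2 (Finset.notMem_empty _),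
        fun s => absurd s.2 (Finset.notMem_empty _)⟩
    · obtain ⟨i, hi⟩ : ∃ i : Fin 2, x ∈ A i := hx.elim (⟨0, ·⟩) (⟨1, ·⟩)
      refine ⟨fun _ => i, fun a b _ => Subtype.ext ?_, fun s => ?_⟩
      · rw [Finset.mem_singleton.mp a.2, Finset.mem_singleton.mp b.2]
      · rw [Finset.mem_singleton.mp s.2]; exact hi
    · refine ⟨fun s => if (s : α) = x then 0 else 1, ?_, ?_⟩
      · intro a b h
        by_cases hax : (a : α) = x <;> by_cases hbx : (b : α) = x
        · exact Subtype.ext (hax.trans hbx.symm)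
        · simp [hax, hbx] at h
        · simp [hax, hbx] at h
        · apply Subtype.ext
          have ha := a.2; have hb := b.2
          simp only [Finset.mem_insert, Finset.mem_singleton] at ha hb
          rw [ha.resolve_left hax, hb.resolve_left hbx]
      · intro s
        show (s : α) ∈ A (if (s : α) = x then 0 else 1)
        by_cases hsx : (s : α) = x
        · rw [if_pos hsx, hsx]; exact hx
        · have := s.2
          simp only [Finset.mem_insert, Finset.mem_singleton] at this
          rw [if_neg hsx, this.resolve_left hsx]; exact hy
lemma transversal_mono {α : Type*} {A B : Fin 2 → Set α} (h : ∀ i, A i ⊆ B i)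
    {S : Finset α} (hS : IsPartialTransversal A S) : IsPartialTransversal B S := by
  obtain ⟨f, hinj, hmem⟩ := hS
  exact ⟨f, hinj, fun s => h _ (hmem s)⟩

lemma maximalPres_iff {α : Type*} [DecidableEq α] (A : Fin 2 → Set α) :
    IsMaximalPresentation A ↔
      (∃ x y, x ≠ y ∧ x ∈ A 0 ∧ y ∈ A 1) ∧
      (∀ e, A 0 \ A 1 ≠ {e}) ∧ (∀ e, A 1 \ A 0 ≠ {e}) := by
  classical
  constructor
  · rintro ⟨⟨T, hT, hTcard⟩, -, hmax⟩
    refine ⟨?_, ?_, ?_⟩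
    · rcases (transversal_char A T).mp hT with rfl | ⟨x, rfl, -⟩ | ⟨x, y, hxy, rfl, hx, hy⟩
      · simp at hTcard
      · simp at hTcard
      · exact ⟨x, y, hxy, hx, hy⟩
    · -- A 0 \ A 1 ≠ {e} : otherwise enlarge A 1 by e
      intro e he
      have heA : e ∈ A 0 \ A 1 := he ▸ rfl
      set B : Fin 2 → Set α := fun j => if j = 1 then insert e (A 1) else A 0 with hB
      have hB0 : B 0 = A 0 := by simp [hB]
      have hB1 : B 1 = insert e (A 1) := by simp [hB]
      have hsub : ∀ i, A i ⊆ B i := by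
        intro i
        rcases fin2_cases i with rfl | rfl
        · rw [hB0]
        · rw [hB1]; exact Set.subset_insert _ _
      have hsame : ∀ S : Finset α, IsPartialTransversal B S ↔ IsPartialTransversal A S := by
        intro S
        constructor
        · intro h
          rcases (transversal_char B S).mp h with rfl | ⟨x, rfl, hx⟩ | ⟨x, y, hxy, rfl, hx, hy⟩
          · exact (transversal_char A _).mpr (Or.inl rfl)
          · refine (transversal_char A _).mpr (Or.inr (Or.inl ⟨x, rfl, ?_⟩))
            rw [hB0] at hx
            rcases hx with hx | hx
            · exact Or.inl hx
            · rw [hB1] at hx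
              rcases Set.mem_insert_iff.mp hx with rfl | hx
              · exact Or.inl heA.1
              · exact Or.inr hx
          · rw [hB0] at hx; rw [hB1] at hy
            rcases Set.mem_insert_iff.mp hy with rfl | hy
            · -- y = e : then e ∈ A 0, and x ∈ A 0; need x ∈ A 1
              have hxA1 : x ∈ A 1 := by
                by_contra hxn
                have : x ∈ A 0 \ A 1 := ⟨hx, hxn⟩
                rw [he] at this
                exact hxy (Set.mem_singleton_iff.mp this)
              exact (transversal_char A _).mpr (Or.inr (Or.inr
                ⟨y, x, hxy.symm, Finset.pair_comm x y, heA.1, hxA1⟩))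
            · exact (transversal_char A _).mpr (Or.inr (Or.inr ⟨x, y, hxy, rfl, hx, hy⟩))
        · exact transversal_mono hsub
      have := hmax B hsame hsub 1
      rw [hB1] at this
      have : e ∈ A 1 := this ▸ Set.mem_insert e (A 1)
      exact heA.2 this
    · -- A 1 \ A 0 ≠ {e} : otherwise enlarge A 0 by e
      intro e he
      have heA : e ∈ A 1 \ A 0 := he ▸ rfl
      set B : Fin 2 → Set α := fun j => if j = 0 then insert e (A 0) else A 1 with hB
      have hB0 : B 0 = insert e (A 0) := by simp [hB]
      have hB1 : B 1 = A 1 := by simp [hB]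
      have hsub : ∀ i, A i ⊆ B i := by
        intro i
        rcases fin2_cases i with rfl | rfl
        · rw [hB0]; exact Set.subset_insert _ _
        · rw [hB1]
      have hsame : ∀ S : Finset α, IsPartialTransversal B S ↔ IsPartialTransversal A S := by
        intro S
        constructor
        · intro h
          rcases (transversal_char B S).mp h with rfl | ⟨x, rfl, hx⟩ | ⟨x, y, hxy, rfl, hx, hy⟩
          · exact (transversal_char A _).mpr (Or.inl rfl)
          · refine (transversal_char A _).mpr (Or.inr (Or.inl ⟨x, rfl, ?_⟩))
            rw [hB1] at hx
            rcases hx with hx | hx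
            · rw [hB0] at hx
              rcases Set.mem_insert_iff.mp hx with rfl | hx
              · exact Or.inr heA.1
              · exact Or.inl hx
            · exact Or.inr hx
          · rw [hB1] at hy; rw [hB0] at hx
            rcases Set.mem_insert_iff.mp hx with rfl | hx
            · have hyA0 : y ∈ A 0 := by
                by_contra hyn
                have : y ∈ A 1 \ A 0 := ⟨hy, hyn⟩
                rw [he] at this
                exact hxy ((Set.mem_singleton_iff.mp this).symm)
              exact (transversal_char A _).mpr (Or.inr (Or.inr
                ⟨y, x, hxy.symm, Finset.pair_comm x y, hyA0, heA.1⟩))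
            · exact (transversal_char A _).mpr (Or.inr (Or.inr ⟨x, y, hxy, rfl, hx, hy⟩))
        · exact transversal_mono hsub
      have := hmax B hsame hsub 0
      rw [hB0] at this
      have : e ∈ A 0 := this ▸ Set.mem_insert e (A 0)
      exact heA.2 this
  · rintro ⟨⟨x, y, hxy, hx, hy⟩, h10, h01⟩
    refine ⟨⟨{x, y}, (transversal_char A _).mpr (Or.inr (Or.inr ⟨x, y, hxy, rfl, hx, hy⟩)),
        Finset.card_pair hxy⟩, ?_, ?_⟩
    · intro S hS
      rcases (transversal_char A S).mp hS with rfl | ⟨a, rfl, -⟩ | ⟨a, b, hab, rfl, -, -⟩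
      · simp
      · simp
      · exact Finset.card_insert_le _ _ |>.trans (by simp)
    · intro B hsame hsub i
      refine Set.Subset.antisymm ?_ (hsub i)
      intro e heB
      by_contra heA
      -- {e} is a B-transversal
      have h1 : IsPartialTransversal B {e} := by
        refine (transversal_char B _).mpr (Or.inr (Or.inl ⟨e, rfl, ?_⟩))
        rcases fin2_cases i with rfl | rfl
        · exact Or.inl heB
        · exact Or.inr heB
      have h1A := (hsame _).mp h1
      rcases (transversal_char A _).mp h1A with h' | ⟨a, ha, hmem⟩ | ⟨a, b, hab, hpair, -, -⟩
      · exact absurd h' (by simp)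
      · have ha' : e = a := by
          have : e ∈ ({a} : Finset α) := ha ▸ Finset.mem_singleton_self e
          exact Finset.mem_singleton.mp this
        subst ha'
        rcases fin2_cases i with rfl | rfl
        · -- e ∈ B 0, e ∉ A 0, so e ∈ A 1, e ∈ A1\A0
          have heA1 : e ∈ A 1 := hmem.resolve_left heA
          have hmem01 : e ∈ A 1 \ A 0 := ⟨heA1, heA⟩
          -- A1\A0 ≠ {e}, so there is z ∈ A1\A0, z ≠ e
          obtain ⟨z, hz, hze⟩ : ∃ z ∈ A 1 \ A 0, z ≠ e := by
            by_contra hcon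
            push_neg at hcon
            exact h01 e (Set.eq_singleton_iff_unique_mem.mpr ⟨hmem01, hcon⟩)
          have hpt : IsPartialTransversal B {e, z} :=
            (transversal_char B _).mpr (Or.inr (Or.inr
              ⟨e, z, hze.symm, rfl, heB, hsub 1 hz.1⟩))
          rcases (transversal_char A _).mp ((hsame _).mp hpt) with h' | ⟨a, ha, -⟩ |
              ⟨a, b, hab, hpair, haA, hbA⟩
          · have : e ∈ (∅ : Finset α) := h' ▸ Finset.mem_insert_self e {z}
            simp at this
          · have he' : e ∈ ({a} : Finset α) := ha ▸ Finset.mem_insert_self e {z}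
            have hz' : z ∈ ({a} : Finset α) := ha ▸ (by simp : z ∈ ({e, z} : Finset α))
            rw [Finset.mem_singleton] at he' hz'
            exact hze (hz'.trans he'.symm)
          · have hamem : a ∈ ({e, z} : Finset α) := hpair ▸ Finset.mem_insert_self a {b}
            rcases Finset.mem_insert.mp hamem with rfl | h'
            · exact heA haA
            · rw [Finset.mem_singleton] at h'
              subst h'
              exact hz.2 haA
        · -- e ∈ B 1, e ∉ A 1, so e ∈ A 0, e ∈ A0\A1
          have heA0 : e ∈ A 0 := hmem.resolve_right heA
          have hmem10 : e ∈ A 0 \ A 1 := ⟨heA0, heA⟩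
          obtain ⟨z, hz, hze⟩ : ∃ z ∈ A 0 \ A 1, z ≠ e := by
            by_contra hcon
            push_neg at hcon
            exact h10 e (Set.eq_singleton_iff_unique_mem.mpr ⟨hmem10, hcon⟩)
          have hpt : IsPartialTransversal B {z, e} :=
            (transversal_char B _).mpr (Or.inr (Or.inr
              ⟨z, e, hze, rfl, hsub 0 hz.1, heB⟩))
          rcases (transversal_char A _).mp ((hsame _).mp hpt) with h' | ⟨a, ha, -⟩ |
              ⟨a, b, hab, hpair, haA, hbA⟩
          · have : z ∈ (∅ : Finset α) := h' ▸ Finset.mem_insert_self z {e}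
            simp at this
          · have he' : e ∈ ({a} : Finset α) := ha ▸ (by simp : e ∈ ({z, e} : Finset α))
            have hz' : z ∈ ({a} : Finset α) := ha ▸ Finset.mem_insert_self z {e}
            rw [Finset.mem_singleton] at he' hz'
            exact hze (hz'.trans he'.symm)
          · have hbmem : b ∈ ({z, e} : Finset α) := hpair ▸ (by simp : b ∈ ({a, b} : Finset α))
            rcases Finset.mem_insert.mp hbmem with rfl | h'
            · exact hz.2 hbA
            · rw [Finset.mem_singleton] at h'
              subst h'
              exact heA hbA
      · -- {e} cannot equal a pair
        have : ({e} : Finset α).card = 2 := by rw [hpair]; exact Finset.card_pair hab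
        simp at this

/-- Classification of maximal representations of rank-2 transversal matroids. Let `a₁, a₂, a₃`
be the numbers of rows of a binary `n × 2` matrix `X` equal to `(1,1)`, `(1,0)`, `(0,1)`
respectively. Then `X` encodes a maximal 2-presentation if and only if:
(i) `a₂ = a₃ = 0` and `a₁ ≥ 2`; or (ii) `a₁ ≥ 1` and exactly one of `a₂, a₃` is zero while
the other is at least `2`; or (iii) `a₂ ≥ 2` and `a₃ ≥ 2`. -/
theorem maximal_two_presentation_classification
    (n : ℕ) (X : Matrix (Fin n) (Fin 2) ℝ)
    (hbin : ∀ i j, X i j = 0 ∨ X i j = 1) :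
    IsMaximalPresentation (fun j : Fin 2 => {i : Fin n | X i j = 1}) ↔
      (({i : Fin n | X i 0 = 1 ∧ X i 1 = 0}.ncard = 0 ∧
          {i : Fin n | X i 0 = 0 ∧ X i 1 = 1}.ncard = 0 ∧
          2 ≤ {i : Fin n | X i 0 = 1 ∧ X i 1 = 1}.ncard) ∨
        (1 ≤ {i : Fin n | X i 0 = 1 ∧ X i 1 = 1}.ncard ∧
          (({i : Fin n | X i 0 = 1 ∧ X i 1 = 0}.ncard = 0 ∧
              2 ≤ {i : Fin n | X i 0 = 0 ∧ X i 1 = 1}.ncard) ∨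
            ({i : Fin n | X i 0 = 0 ∧ X i 1 = 1}.ncard = 0 ∧
              2 ≤ {i : Fin n | X i 0 = 1 ∧ X i 1 = 0}.ncard))) ∨
        (2 ≤ {i : Fin n | X i 0 = 1 ∧ X i 1 = 0}.ncard ∧
          2 ≤ {i : Fin n | X i 0 = 0 ∧ X i 1 = 1}.ncard)) := by
  classical
  have hnot : ∀ i j, (¬ X i j = 1) ↔ X i j = 0 :=
    fun i j => ⟨fun h => (hbin i j).resolve_right h, fun h => by rw [h]; norm_num⟩
  rw [maximalPres_iff]
  have e10 : {i : Fin n | X i 0 = 1} \ {i : Fin n | X i 1 = 1}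
      = {i : Fin n | X i 0 = 1 ∧ X i 1 = 0} := by
    ext i; simp only [Set.mem_diff, Set.mem_setOf_eq, hnot]
  have e01 : {i : Fin n | X i 1 = 1} \ {i : Fin n | X i 0 = 1}
      = {i : Fin n | X i 0 = 0 ∧ X i 1 = 1} := by
    ext i
    simp only [Set.mem_diff, Set.mem_setOf_eq, hnot]
    tauto
  have hsingle : ∀ s : Set (Fin n), (∀ e, s ≠ {e}) ↔ s.ncard ≠ 1 := by
    intro s
    simp only [Ne, Set.ncard_eq_one, not_exists]
  have hrank : (∃ x y : Fin n, x ≠ y ∧ x ∈ {i : Fin n | X i 0 = 1} ∧ y ∈ {i : Fin n | X i 1 = 1})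
      ↔ (2 ≤ {i : Fin n | X i 0 = 1 ∧ X i 1 = 1}.ncard ∨
        (1 ≤ {i : Fin n | X i 0 = 1 ∧ X i 1 = 1}.ncard ∧
          1 ≤ {i : Fin n | X i 0 = 1 ∧ X i 1 = 0}.ncard) ∨
        (1 ≤ {i : Fin n | X i 0 = 1 ∧ X i 1 = 1}.ncard ∧
          1 ≤ {i : Fin n | X i 0 = 0 ∧ X i 1 = 1}.ncard) ∨
        (1 ≤ {i : Fin n | X i 0 = 1 ∧ X i 1 = 0}.ncard ∧
          1 ≤ {i : Fin n | X i 0 = 0 ∧ X i 1 = 1}.ncard)) := by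
    constructor
    · rintro ⟨x, y, hxy, hx, hy⟩
      simp only [Set.mem_setOf_eq] at hx hy
      rcases hbin x 1 with h1 | h1 <;> rcases hbin y 0 with h0 | h0
      · -- x ∈ s10, y ∈ s01
        refine Or.inr (Or.inr (Or.inr ⟨?_, ?_⟩))
        · exact (Set.ncard_pos).mpr ⟨x, by simp only [Set.mem_setOf_eq]; exact ⟨hx, h1⟩⟩
        · exact (Set.ncard_pos).mpr ⟨y, by simp only [Set.mem_setOf_eq]; exact ⟨h0, hy⟩⟩
      · -- x ∈ s10, y ∈ s11
        refine Or.inr (Or.inl ⟨?_, ?_⟩)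
        · exact (Set.ncard_pos).mpr ⟨y, by simp only [Set.mem_setOf_eq]; exact ⟨h0, hy⟩⟩
        · exact (Set.ncard_pos).mpr ⟨x, by simp only [Set.mem_setOf_eq]; exact ⟨hx, h1⟩⟩
      · -- x ∈ s11, y ∈ s01
        refine Or.inr (Or.inr (Or.inl ⟨?_, ?_⟩))
        · exact (Set.ncard_pos).mpr ⟨x, by simp only [Set.mem_setOf_eq]; exact ⟨hx, h1⟩⟩
        · exact (Set.ncard_pos).mpr ⟨y, by simp only [Set.mem_setOf_eq]; exact ⟨h0, hy⟩⟩
      · -- both in s11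
        refine Or.inl ((Set.one_lt_ncard_iff).mpr ⟨x, y, ?_, ?_, hxy⟩)
        · simp only [Set.mem_setOf_eq]; exact ⟨hx, h1⟩
        · simp only [Set.mem_setOf_eq]; exact ⟨h0, hy⟩
    · rintro (h | ⟨h, h'⟩ | ⟨h, h'⟩ | ⟨h, h'⟩)
      · obtain ⟨a, b, ha, hb, hab⟩ := (Set.one_lt_ncard_iff).mp h
        simp only [Set.mem_setOf_eq] at ha hb
        exact ⟨a, b, hab, ha.1, hb.2⟩
      · obtain ⟨a, ha⟩ := (Set.ncard_pos).mp h
        obtain ⟨b, hb⟩ := (Set.ncard_pos).mp h'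
        simp only [Set.mem_setOf_eq] at ha hb
        refine ⟨b, a, ?_, hb.1, ha.2⟩
        intro hba
        rw [hba, ha.2] at hb
        norm_num at hb
      · obtain ⟨a, ha⟩ := (Set.ncard_pos).mp h
        obtain ⟨b, hb⟩ := (Set.ncard_pos).mp h'
        simp only [Set.mem_setOf_eq] at ha hb
        refine ⟨a, b, ?_, ha.1, hb.2⟩
        intro hab
        rw [hab, hb.1] at ha
        norm_num at ha
      · obtain ⟨a, ha⟩ := (Set.ncard_pos).mp h
        obtain ⟨b, hb⟩ := (Set.ncard_pos).mp h'
        simp only [Set.mem_setOf_eq] at ha hb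
        refine ⟨a, b, ?_, ha.1, hb.2⟩
        intro hab
        rw [hab, hb.1] at ha
        norm_num at ha
  show ((∃ x y : Fin n, x ≠ y ∧ x ∈ {i : Fin n | X i 0 = 1} ∧ y ∈ {i : Fin n | X i 1 = 1}) ∧
      (∀ e, {i : Fin n | X i 0 = 1} \ {i : Fin n | X i 1 = 1} ≠ {e}) ∧
      (∀ e, {i : Fin n | X i 1 = 1} \ {i : Fin n | X i 0 = 1} ≠ {e})) ↔ _
  rw [hrank, e10, e01, hsingle, hsingle]
  generalize {i : Fin n | X i 0 = 1 ∧ X i 1 = 1}.ncard = a1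
  generalize {i : Fin n | X i 0 = 1 ∧ X i 1 = 0}.ncard = a2
  generalize {i : Fin n | X i 0 = 0 ∧ X i 1 = 1}.ncard = a3
  omega
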